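/- Let F_{S1} := x0^9 + (x1^3 − x2^3)·(x2^3 − x3^3)·(x3^3 − x1^3) and F_{S2} := F_{S1}·(x0^9 − x1^3·x2^3·x3^3) + x1^6·x2^6·x3^6 in ℂ[x0, x1, x2, x3]. For every nonzero vector (a0, a1, a2, a3) ∈ ℂ⁴, the polynomial F_{S2} and all four of its partial derivatives vanish at (a0, a1, a2, a3) if and only if a0 = 0 and a1·a2·a3 = 0. (Equivalently, the singular locus of the projective surface S2 = {F_{S2} = 0} ⊂ ℙ³_ℂ is exactly the union of the three lines L1 = {x0 = x1 = 0}, L2 = {x0 = x2 = 0}, L3 = {x0 = x3 = 0}.) -/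
import Mathlib


open MvPolynomial

/-- The homogeneous degree-9 polynomial defining the surface `S1 ⊂ ℙ³_ℂ`. -/
noncomputable def FS1 : MvPolynomial (Fin 4) ℂ :=
  X 0 ^ 9 + (X 1 ^ 3 - X 2 ^ 3) * (X 2 ^ 3 - X 3 ^ 3) * (X 3 ^ 3 - X 1 ^ 3)

/-- The homogeneous degree-18 polynomial defining the surface `S2 ⊂ ℙ³_ℂ`. -/
noncomputable def FS2 : MvPolynomial (Fin 4) ℂ :=
  FS1 * (X 0 ^ 9 - X 1 ^ 3 * X 2 ^ 3 * X 3 ^ 3) + X 1 ^ 6 * X 2 ^ 6 * X 3 ^ 6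

/-- Contradiction certificate for the branch `a 0 ≠ 0`. -/
lemma stmt_10_aux1 (u v w : ℂ) (hm : u*v*w ≠ 0)
    (hG : (u-v)*(v-w)*(w-u) = -3*(u*v*w))
    (E1 : (v-w)*(v+w-2*u) + 3*(v*w) = 0)
    (E2 : (w-u)*(w+u-2*v) + 3*(u*w) = 0)
    (E3 : (u-v)*(u+v-2*w) + 3*(u*v) = 0) : False := by
  have he2 : u*v + v*w + w*u = 0 := by linear_combination (E1 + E2 + E3)/3
  have he1 : (u+v+w)^3 + 18*(u*v*w) = 0 := by
    linear_combination (-w)*E1 + (-u)*E2 + (-v)*E3 + (6*(u+v+w))*he2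
  have hfin : (u*v*w)^2 = 0 := by
    linear_combination (((u-v)*(v-w)*(w-u) - 3*(u*v*w))/36)*hG + ((u*v*w)/9)*he1
      - (((u+v+w)^2*(u*v+v*w+w*u) - 4*(u*v+v*w+w*u)^2 + 18*(u+v+w)*(u*v*w))/36)*he2
  exact hm (pow_eq_zero_iff two_ne_zero |>.mp hfin)

/-- Contradiction certificate for the branch `a 0 = 0`, `a 1 * a 2 * a 3 ≠ 0`. -/
lemma stmt_10_aux2 (u v w : ℂ) (hm : u*v*w ≠ 0)
    (hG : (u-v)*(v-w)*(w-u) = u*v*w)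
    (E1 : (v-w)*(v+w-2*u) - v*w = 0)
    (E2 : (w-u)*(w+u-2*v) - u*w = 0)
    (E3 : (u-v)*(u+v-2*w) - u*v = 0) : False := by
  have he2 : u*v + v*w + w*u = 0 := by linear_combination -(E1 + E2 + E3)
  have he1 : (u+v+w)^3 + 14*(u*v*w) = 0 := by
    linear_combination (-w)*E1 + (-u)*E2 + (-v)*E3 - 2*hG + (4*(u+v+w))*he2
  have hfin : (u*v*w)^2 = 0 := by
    linear_combination (((u-v)*(v-w)*(w-u) + u*v*w)/28)*hG + ((u*v*w)/7)*he1
      - (((u+v+w)^2*(u*v+v*w+w*u) - 4*(u*v+v*w+w*u)^2 + 18*(u+v+w)*(u*v*w))/28)*he2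
  exact hm (pow_eq_zero_iff two_ne_zero |>.mp hfin)

set_option maxHeartbeats 2000000 in
/-- The singular locus of `S2 = {F_{S2} = 0} ⊂ ℙ³_ℂ` is exactly the union of the three
lines `{x0 = x1 = 0}`, `{x0 = x2 = 0}`, `{x0 = x3 = 0}`: for a nonzero `a ∈ ℂ⁴`, `F_{S2}`
and all four of its partial derivatives vanish at `a` iff `a 0 = 0` and
`a 1 * a 2 * a 3 = 0`. -/
theorem stmt_10 (a : Fin 4 → ℂ) (ha : a ≠ 0) :
    (eval a FS2 = 0 ∧ ∀ i : Fin 4, eval a (pderiv i FS2) = 0) ↔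
      (a 0 = 0 ∧ a 1 * a 2 * a 3 = 0) := by
  have hF : eval a FS2 =
      (a 0^9 + (a 1^3 - a 2^3)*(a 2^3 - a 3^3)*(a 3^3 - a 1^3)) *
        (a 0^9 - a 1^3*a 2^3*a 3^3) + (a 1^3*a 2^3*a 3^3)^2 := by
    simp [FS2, FS1]; ring
  have hD0 : eval a (pderiv 0 FS2) =
      9 * a 0^8 * (2*a 0^9 + (a 1^3 - a 2^3)*(a 2^3 - a 3^3)*(a 3^3 - a 1^3)
        - a 1^3*a 2^3*a 3^3) := by
    simp (config := { decide := true }) [FS2, FS1, pderiv_mul, pderiv_pow, pderiv_X,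
      Pi.single_apply, Fin.ext_iff]
    ring
  have hD1 : eval a (pderiv 1 FS2) =
      3 * a 1^2 * (((a 2^3 - a 3^3)*(a 3^3 - a 1^3) - (a 1^3 - a 2^3)*(a 2^3 - a 3^3)) *
          (a 0^9 - a 1^3*a 2^3*a 3^3)
        - (a 0^9 + (a 1^3 - a 2^3)*(a 2^3 - a 3^3)*(a 3^3 - a 1^3)) * (a 2^3*a 3^3)
        + 2*(a 1^3*a 2^3*a 3^3)*(a 2^3*a 3^3)) := by
    simp (config := { decide := true }) [FS2, FS1, pderiv_mul, pderiv_pow, pderiv_X,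
      Pi.single_apply, Fin.ext_iff]
    ring
  have hD2 : eval a (pderiv 2 FS2) =
      3 * a 2^2 * (((a 3^3 - a 1^3)*(a 3^3 + a 1^3 - 2*a 2^3)) *
          (a 0^9 - a 1^3*a 2^3*a 3^3)
        - (a 0^9 + (a 1^3 - a 2^3)*(a 2^3 - a 3^3)*(a 3^3 - a 1^3)) * (a 1^3*a 3^3)
        + 2*(a 1^3*a 2^3*a 3^3)*(a 1^3*a 3^3)) := by
    simp (config := { decide := true }) [FS2, FS1, pderiv_mul, pderiv_pow, pderiv_X,
      Pi.single_apply, Fin.ext_iff]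
    ring
  have hD3 : eval a (pderiv 3 FS2) =
      3 * a 3^2 * (((a 1^3 - a 2^3)*(a 1^3 + a 2^3 - 2*a 3^3)) *
          (a 0^9 - a 1^3*a 2^3*a 3^3)
        - (a 0^9 + (a 1^3 - a 2^3)*(a 2^3 - a 3^3)*(a 3^3 - a 1^3)) * (a 1^3*a 2^3)
        + 2*(a 1^3*a 2^3*a 3^3)*(a 1^3*a 2^3)) := by
    simp (config := { decide := true }) [FS2, FS1, pderiv_mul, pderiv_pow, pderiv_X,
      Pi.single_apply, Fin.ext_iff]
    ring
  constructor
  · rintro ⟨h0, hd⟩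
    rw [hF] at h0
    have d0 := hd 0; rw [hD0] at d0
    have d1 := hd 1; rw [hD1] at d1
    have d2 := hd 2; rw [hD2] at d2
    have d3 := hd 3; rw [hD3] at d3
    have hA : a 0 = 0 := by
      by_contra hA
      have h1 := (mul_eq_zero.mp d0).resolve_left
        (mul_ne_zero (by norm_num) (pow_ne_zero _ hA))
      have hq : a 0^9 * (a 0^9 - 2*(a 1^3*a 2^3*a 3^3)) = 0 := by
        linear_combination (-1 : ℂ)*h0 + (a 0^9 - a 1^3*a 2^3*a 3^3)*h1
      have hp : a 0^9 = 2*(a 1^3*a 2^3*a 3^3) := by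
        have := (mul_eq_zero.mp hq).resolve_left (pow_ne_zero _ hA)
        linear_combination this
      have hm : a 1^3*a 2^3*a 3^3 ≠ 0 := by
        intro h
        exact hA (pow_eq_zero_iff (n := 9) (by norm_num) |>.mp (by linear_combination hp + 2*h))
      have hB : a 1 ≠ 0 := fun h => hm (by rw [h]; ring)
      have hC : a 2 ≠ 0 := fun h => hm (by rw [h]; ring)
      have hD : a 3 ≠ 0 := fun h => hm (by rw [h]; ring)
      have hG : (a 1^3 - a 2^3)*(a 2^3 - a 3^3)*(a 3^3 - a 1^3) = -3*(a 1^3*a 2^3*a 3^3) := by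
        linear_combination h1 - 2*hp
      have b1 := (mul_eq_zero.mp d1).resolve_left
        (mul_ne_zero (by norm_num) (pow_ne_zero _ hB))
      have b2 := (mul_eq_zero.mp d2).resolve_left
        (mul_ne_zero (by norm_num) (pow_ne_zero _ hC))
      have b3 := (mul_eq_zero.mp d3).resolve_left
        (mul_ne_zero (by norm_num) (pow_ne_zero _ hD))
      have E1 : (a 2^3 - a 3^3)*(a 2^3 + a 3^3 - 2*a 1^3) + 3*(a 2^3*a 3^3) = 0 := by
        have c1 : (a 1^3*a 2^3*a 3^3) *
            ((a 2^3 - a 3^3)*(a 2^3 + a 3^3 - 2*a 1^3) + 3*(a 2^3*a 3^3)) = 0 := by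
          linear_combination b1
            + (a 2^3*a 3^3 - ((a 2^3 - a 3^3)*(a 3^3 - a 1^3) - (a 1^3 - a 2^3)*(a 2^3 - a 3^3)))*hp
            + (a 2^3*a 3^3)*hG
        exact (mul_eq_zero.mp c1).resolve_left hm
      have E2 : (a 3^3 - a 1^3)*(a 3^3 + a 1^3 - 2*a 2^3) + 3*(a 1^3*a 3^3) = 0 := by
        have c2 : (a 1^3*a 2^3*a 3^3) *
            ((a 3^3 - a 1^3)*(a 3^3 + a 1^3 - 2*a 2^3) + 3*(a 1^3*a 3^3)) = 0 := by
          linear_combination b2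
            + (a 1^3*a 3^3 - (a 3^3 - a 1^3)*(a 3^3 + a 1^3 - 2*a 2^3))*hp
            + (a 1^3*a 3^3)*hG
        exact (mul_eq_zero.mp c2).resolve_left hm
      have E3 : (a 1^3 - a 2^3)*(a 1^3 + a 2^3 - 2*a 3^3) + 3*(a 1^3*a 2^3) = 0 := by
        have c3 : (a 1^3*a 2^3*a 3^3) *
            ((a 1^3 - a 2^3)*(a 1^3 + a 2^3 - 2*a 3^3) + 3*(a 1^3*a 2^3)) = 0 := by
          linear_combination b3
            + (a 1^3*a 2^3 - (a 1^3 - a 2^3)*(a 1^3 + a 2^3 - 2*a 3^3))*hp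
            + (a 1^3*a 2^3)*hG
        exact (mul_eq_zero.mp c3).resolve_left hm
      exact stmt_10_aux1 (a 1^3) (a 2^3) (a 3^3) hm hG E1 E2 E3
    refine ⟨hA, ?_⟩
    by_contra hne
    have hm : a 1^3*a 2^3*a 3^3 ≠ 0 := by
      intro h
      exact hne (pow_eq_zero_iff (n := 3) (by norm_num) |>.mp (by linear_combination h))
    have hB : a 1 ≠ 0 := fun h => hm (by rw [h]; ring)
    have hC : a 2 ≠ 0 := fun h => hm (by rw [h]; ring)
    have hD : a 3 ≠ 0 := fun h => hm (by rw [h]; ring)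
    rw [hA] at h0 d1 d2 d3
    have hGm : (a 1^3 - a 2^3)*(a 2^3 - a 3^3)*(a 3^3 - a 1^3) = a 1^3*a 2^3*a 3^3 := by
      have c0 : (a 1^3*a 2^3*a 3^3) *
          ((a 1^3 - a 2^3)*(a 2^3 - a 3^3)*(a 3^3 - a 1^3) - a 1^3*a 2^3*a 3^3) = 0 := by
        linear_combination (-1 : ℂ)*h0
      have := (mul_eq_zero.mp c0).resolve_left hm
      linear_combination this
    have b1 := (mul_eq_zero.mp d1).resolve_left
      (mul_ne_zero (by norm_num) (pow_ne_zero _ hB))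
    have b2 := (mul_eq_zero.mp d2).resolve_left
      (mul_ne_zero (by norm_num) (pow_ne_zero _ hC))
    have b3 := (mul_eq_zero.mp d3).resolve_left
      (mul_ne_zero (by norm_num) (pow_ne_zero _ hD))
    have E1 : (a 2^3 - a 3^3)*(a 2^3 + a 3^3 - 2*a 1^3) - a 2^3*a 3^3 = 0 := by
      have c1 : (a 1^3*a 2^3*a 3^3) *
          ((a 2^3 - a 3^3)*(a 2^3 + a 3^3 - 2*a 1^3) - a 2^3*a 3^3) = 0 := by
        linear_combination (-1 : ℂ)*b1 - (a 2^3*a 3^3)*hGm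
      exact (mul_eq_zero.mp c1).resolve_left hm
    have E2 : (a 3^3 - a 1^3)*(a 3^3 + a 1^3 - 2*a 2^3) - a 1^3*a 3^3 = 0 := by
      have c2 : (a 1^3*a 2^3*a 3^3) *
          ((a 3^3 - a 1^3)*(a 3^3 + a 1^3 - 2*a 2^3) - a 1^3*a 3^3) = 0 := by
        linear_combination (-1 : ℂ)*b2 - (a 1^3*a 3^3)*hGm
      exact (mul_eq_zero.mp c2).resolve_left hm
    have E3 : (a 1^3 - a 2^3)*(a 1^3 + a 2^3 - 2*a 3^3) - a 1^3*a 2^3 = 0 := by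
      have c3 : (a 1^3*a 2^3*a 3^3) *
          ((a 1^3 - a 2^3)*(a 1^3 + a 2^3 - 2*a 3^3) - a 1^3*a 2^3) = 0 := by
        linear_combination (-1 : ℂ)*b3 - (a 1^3*a 2^3)*hGm
      exact (mul_eq_zero.mp c3).resolve_left hm
    exact stmt_10_aux2 (a 1^3) (a 2^3) (a 3^3) hm hGm E1 E2 E3
  · rintro ⟨hA, hBCD⟩
    have h3 : a 1 = 0 ∨ a 2 = 0 ∨ a 3 = 0 := by
      rcases mul_eq_zero.mp hBCD with h | h
      · rcases mul_eq_zero.mp h with h' | h'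
        · exact Or.inl h'
        · exact Or.inr (Or.inl h')
      · exact Or.inr (Or.inr h)
    constructor
    · rw [hF, hA]
      rcases h3 with h | h | h <;> rw [h] <;> ring
    · intro i
      fin_cases i
      · show eval a (pderiv 0 FS2) = 0
        rw [hD0, hA]; ring
      · show eval a (pderiv 1 FS2) = 0
        rw [hD1, hA]
        rcases h3 with h | h | h <;> rw [h] <;> ring
      · show eval a (pderiv 2 FS2) = 0
        rw [hD2, hA]
        rcases h3 with h | h | h <;> rw [h] <;> ring
      · show eval a (pderiv 3 FS2) = 0
        rw [hD3, hA]
        rcases h3 with h | h | h <;> rw [h] <;> ring
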